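/- arXiv:2401.09216 — 3 statements merged into one kernel-verified Lean document; each statement's English description precedes it below -/
import Mathlib

section
/- Domination of higher-order trace terms by the first: let B be an n×n max-plus matrix, p, q nonzero vectors with q⁻p finite, and define F_k = ⊕_{0 ≤ i_1+⋯+i_k ≤ n−k} (pq⁻)B^{i_1}⋯(pq⁻)B^{i_k} for k = 1,…,n. Then ⊕_{k=1}^n tr^{1/k}(F_k) = tr F_1 = q⁻ B* p, where B* = I ⊕ B ⊕ ⋯ ⊕ B^{n−1} is the Kleene star (assuming Tr(B) ≤ 0 so B* is defined). -/
noncomputable section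
abbrev T := WithBot ℝ

/-- Tropical (max-plus) sum over a finite family. -/
def tSum {n : ℕ} (f : Fin n → T) : T := Finset.univ.sup f

/-- Tropical matrix product. -/
def tMulM {m n p : ℕ} (A : Matrix (Fin m) (Fin n) T) (B : Matrix (Fin n) (Fin p) T) :
    Matrix (Fin m) (Fin p) T := fun i j => tSum fun k => A i k + B k j

/-- Tropical identity matrix. -/
def tId (n : ℕ) : Matrix (Fin n) (Fin n) T := fun i j => if i = j then (0 : T) else ⊥

/-- Tropical matrix power. -/
def tpow {n : ℕ} (A : Matrix (Fin n) (Fin n) T) : ℕ → Matrix (Fin n) (Fin n) T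
  | 0 => tId n
  | k + 1 => tMulM (tpow A k) A

/-- Tropical trace. -/
def tTr {n : ℕ} (A : Matrix (Fin n) (Fin n) T) : T := tSum fun k => A k k

/-- Multiplicative conjugate of a scalar: negation on finite entries, -∞ ↦ -∞. -/
def tconj (t : T) : T := WithBot.map (fun a : ℝ => -a) t

/-- Kleene star (for an n×n matrix): I ⊕ A ⊕ ⋯ ⊕ A^(n-1). -/
def kstar {n : ℕ} (A : Matrix (Fin n) (Fin n) T) : Matrix (Fin n) (Fin n) T :=
  fun i j => tSum fun k : Fin n => tpow A (k : ℕ) i j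

/-- Tr(A) = tr A ⊕ ⋯ ⊕ tr Aⁿ. -/
def TrB {n : ℕ} (A : Matrix (Fin n) (Fin n) T) : T := tSum fun k : Fin n => tTr (tpow A ((k : ℕ) + 1))

/-- Tropical root: t^{1/k} = t/k. -/
def tdiv (t : T) (k : ℕ) : T := WithBot.map (fun a : ℝ => a / k) t

/-- Row vector × matrix × column vector. -/
def vMv {n : ℕ} (u : Fin n → T) (A : Matrix (Fin n) (Fin n) T) (v : Fin n → T) : T :=
  tSum fun i => u i + tSum fun j => A i j + v j

/-- The rank-one matrix p q⁻. -/
def pqm {n : ℕ} (p q : Fin n → T) : Matrix (Fin n) (Fin n) T := fun i j => p i + tconj (q j)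

/-- The product M B^{i₁} ⋯ M B^{i_k} for exponents given by v. -/
def chain {n : ℕ} (B M : Matrix (Fin n) (Fin n) T) :
    (k : ℕ) → (Fin k → ℕ) → Matrix (Fin n) (Fin n) T
  | 0, _ => tId n
  | k + 1, v => tMulM (tMulM M (tpow B (v 0))) (chain B M k (fun i => v i.succ))

/-- F_k = ⊕_{0 ≤ i₁+⋯+i_k ≤ n−k} (p q⁻) B^{i₁} ⋯ (p q⁻) B^{i_k}. -/
def Fmat {n : ℕ} (B : Matrix (Fin n) (Fin n) T) (p q : Fin n → T) (k : ℕ) :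
    Matrix (Fin n) (Fin n) T := fun i j =>
  (Finset.univ.filter (fun v : Fin k → Fin n => (∑ l, ((v l : ℕ))) + k ≤ n)).sup
    (fun v => chain B (pqm p q) k (fun l => (v l : ℕ)) i j)


/-!
Because `p q⁻` has rank one, a product `p q⁻ B^{i₁} ⋯ p q⁻ B^{i_k}` has the entries
`p_i + (q⁻ B^{i₁} p) + ⋯ + (q⁻ B^{i_{k-1}} p) + (q⁻ B^{i_k})_j`, so its trace is the tropical
product of the `k` scalars `q⁻ B^{i_l} p`. Each of them is a term of
`tr F₁ = ⊕_{i < n} q⁻ B^i p`, whence `tr F_k ≤ k · tr F₁` (tropical AM-GM), i.e.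
`tr^{1/k} F_k ≤ tr F₁`, with equality for `k = 1`. Finally `q⁻ A p` distributes over `⊕` in `A`,
which turns `⊕_{i < n} q⁻ B^i p` into `q⁻ B* p`.
-/

namespace MaxPlus

section tSum

variable {m : ℕ}

lemma le_tSum (f : Fin m → T) (i : Fin m) : f i ≤ tSum f :=
  Finset.le_sup (Finset.mem_univ i)

lemma tSum_le {f : Fin m → T} {c : T} (h : ∀ i, f i ≤ c) : tSum f ≤ c :=
  Finset.sup_le fun i _ => h i

lemma add_tSum (a : T) (f : Fin m → T) : a + tSum f = tSum fun i => a + f i :=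
  Finset.apply_sup_eq_sup_comp_of_linearOrder (a + ·) (fun _ _ h => add_le_add_right h a)
    (WithBot.add_bot a)

lemma tSum_add (f : Fin m → T) (a : T) : tSum f + a = tSum fun i => f i + a := by
  simp only [add_comm _ a, add_tSum]

lemma tSum_comm {m' : ℕ} (f : Fin m → Fin m' → T) :
    (tSum fun i => tSum fun j => f i j) = tSum fun j => tSum fun i => f i j :=
  Finset.sup_comm _ _ f

end tSum

lemma tMulM_tId {m : ℕ} (A : Matrix (Fin m) (Fin m) T) : tMulM A (tId m) = A := by
  funext i j
  refine le_antisymm (tSum_le fun l => ?_) ?_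
  · by_cases h : l = j <;> simp [tId, h]
  · calc A i j = A i j + tId m j j := by simp [tId]
      _ ≤ _ := le_tSum (fun l => A i l + tId m l j) j

def tVecMul {n : ℕ} (u : Fin n → T) (A : Matrix (Fin n) (Fin n) T) : Fin n → T :=
  fun j => tSum fun l => u l + A l j

lemma vMv_eq_tSum_tVecMul {n : ℕ} (u : Fin n → T) (A : Matrix (Fin n) (Fin n) T)
    (v : Fin n → T) : vMv u A v = tSum fun j => tVecMul u A j + v j := by
  simp only [vMv, tVecMul, add_tSum, tSum_add, add_assoc]
  exact tSum_comm _

lemma vMv_tSum {n m : ℕ} (u : Fin n → T) (A : Fin m → Matrix (Fin n) (Fin n) T)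
    (v : Fin n → T) :
    vMv u (fun i j => tSum fun k => A k i j) v = tSum fun k => vMv u (A k) v := by
  simp only [vMv, tSum_add, add_tSum]
  exact (congrArg tSum (funext fun i => tSum_comm _)).trans (tSum_comm _)

section RankOne

variable {n : ℕ} (B : Matrix (Fin n) (Fin n) T) (p q : Fin n → T)

lemma pqm_tMulM_apply (A : Matrix (Fin n) (Fin n) T) (i j : Fin n) :
    tMulM (pqm p q) A i j = p i + tVecMul (fun l => tconj (q l)) A j := by
  simp only [tMulM, pqm, tVecMul, add_tSum, add_assoc]

lemma chain_succ_apply (k : ℕ) (v : Fin (k + 1) → ℕ) (i j : Fin n) :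
    chain B (pqm p q) (k + 1) v i j =
      p i + (∑ l : Fin k, vMv (fun i => tconj (q i)) (tpow B (v l.castSucc)) p) +
        tVecMul (fun l => tconj (q l)) (tpow B (v (Fin.last k))) j := by
  induction k generalizing i j with
  | zero =>
    simp [chain, tMulM_tId, pqm_tMulM_apply]
  | succ k ih =>
    have hsplit : ∀ l, tMulM (pqm p q) (tpow B (v 0)) i l +
          chain B (pqm p q) (k + 1) (fun i => v i.succ) l j =
        (p i + (∑ l : Fin k, vMv (fun i => tconj (q i)) (tpow B (v l.succ.castSucc)) p) +
          tVecMul (fun l => tconj (q l)) (tpow B (v (Fin.last (k + 1)))) j) +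
          (tVecMul (fun l => tconj (q l)) (tpow B (v 0)) l + p l) := by
      intro l
      rw [pqm_tMulM_apply, ih, Fin.succ_last]
      simp only [Fin.succ_castSucc]
      abel
    rw [chain, tMulM, funext hsplit, ← add_tSum, ← vMv_eq_tSum_tVecMul, Fin.sum_univ_succ]
    simp only [Fin.castSucc_zero]
    abel

lemma tTr_chain_succ (k : ℕ) (v : Fin (k + 1) → ℕ) :
    tTr (chain B (pqm p q) (k + 1) v) =
      ∑ l, vMv (fun i => tconj (q i)) (tpow B (v l)) p := by
  have hdiag : ∀ i, chain B (pqm p q) (k + 1) v i i =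
      (∑ l : Fin k, vMv (fun i => tconj (q i)) (tpow B (v l.castSucc)) p) +
        (tVecMul (fun l => tconj (q l)) (tpow B (v (Fin.last k))) i + p i) := by
    intro i
    rw [chain_succ_apply]
    abel
  rw [tTr, funext hdiag, ← add_tSum, ← vMv_eq_tSum_tVecMul, Fin.sum_univ_castSucc]

lemma tTr_Fmat (k : ℕ) :
    tTr (Fmat B p q k) =
      (Finset.univ.filter fun v : Fin k → Fin n => ∑ l, (v l : ℕ) + k ≤ n).sup
        fun v => tTr (chain B (pqm p q) k fun l => v l) := by
  unfold tTr tSum Fmat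
  exact Finset.sup_comm _ _ _

lemma tTr_Fmat_one :
    tTr (Fmat B p q 1) = tSum fun m : Fin n => vMv (fun i => tconj (q i)) (tpow B m) p := by
  have hall : (Finset.univ.filter fun v : Fin 1 → Fin n => ∑ l, (v l : ℕ) + 1 ≤ n) =
      Finset.univ :=
    Finset.filter_true_of_mem fun v _ => by simp [(v 0).isLt]
  rw [tTr_Fmat, hall, tSum,
    ← Finset.univ_map_equiv_to_embedding (Equiv.funUnique (Fin 1) (Fin n)).symm, Finset.sup_map]
  simp [Function.comp_def, tTr_chain_succ]

lemma tTr_Fmat_succ_le (k : ℕ) : tTr (Fmat B p q (k + 1)) ≤ (k + 1) • tTr (Fmat B p q 1) := by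
  rw [tTr_Fmat]
  refine Finset.sup_le fun v _ => ?_
  calc tTr (chain B (pqm p q) (k + 1) fun l => v l)
      = ∑ l, vMv (fun i => tconj (q i)) (tpow B (v l)) p := tTr_chain_succ B p q k _
    _ ≤ ∑ _l : Fin (k + 1), tTr (Fmat B p q 1) :=
      Finset.sum_le_sum fun l _ => by
        rw [tTr_Fmat_one]
        exact le_tSum (fun m : Fin n => vMv (fun i => tconj (q i)) (tpow B m) p) (v l)
    _ = (k + 1) • tTr (Fmat B p q 1) := by simp

end RankOne

lemma tdiv_le_of_le_nsmul {t c : T} (m : ℕ) (h : t ≤ (m + 1) • c) : tdiv t (m + 1) ≤ c := by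
  induction t using WithBot.recBotCoe with
  | bot => exact bot_le
  | coe x =>
    induction c using WithBot.recBotCoe with
    | bot => simp [succ_nsmul] at h
    | coe y =>
      rw [← WithBot.coe_nsmul, WithBot.coe_le_coe, nsmul_eq_mul] at h
      change ((x / ((m + 1 : ℕ) : ℝ) : ℝ) : T) ≤ y
      rw [WithBot.coe_le_coe, div_le_iff₀ (by positivity), mul_comm]
      exact h

lemma tdiv_one (t : T) : tdiv t 1 = t := by
  induction t using WithBot.recBotCoe with
  | bot => rfl
  | coe x => simp [tdiv]

end MaxPlus

open MaxPlus in
theorem tropical_trace_terms_dominated_general {n : ℕ} (B : Matrix (Fin n) (Fin n) T)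
    (p q : Fin n → T) :
    tSum (fun k : Fin n => tdiv (tTr (Fmat B p q ((k : ℕ) + 1))) ((k : ℕ) + 1)) =
        tTr (Fmat B p q 1) ∧
      tTr (Fmat B p q 1) = vMv (fun i => tconj (q i)) (kstar B) p := by
  refine ⟨le_antisymm ?_ ?_, ?_⟩
  · exact tSum_le fun k => tdiv_le_of_le_nsmul k (tTr_Fmat_succ_le B p q k)
  · refine tSum_le fun i => ?_
    calc Fmat B p q 1 i i ≤ tTr (Fmat B p q 1) := le_tSum (fun j => Fmat B p q 1 j j) i
      _ = tdiv (tTr (Fmat B p q 1)) 1 := (tdiv_one _).symm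
      _ ≤ _ := le_tSum (fun k : Fin n => tdiv (tTr (Fmat B p q (k + 1))) (k + 1)) ⟨0, i.pos⟩
  · rw [tTr_Fmat_one]
    exact (vMv_tSum _ (fun m : Fin n => tpow B m) p).symm

/-- Domination of higher-order trace terms by the first:
⊕_{k=1}^n tr^{1/k}(F_k) = tr F₁ = q⁻ B* p. -/
theorem tropical_trace_terms_dominated {n : ℕ} (B : Matrix (Fin n) (Fin n) T)
    (p q : Fin n → T) (hp : ∃ i, p i ≠ ⊥) (hq : ∃ i, q i ≠ ⊥)
    (hqp : tSum (fun i => tconj (q i) + p i) ≠ ⊥)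
    (hTr : TrB B ≤ 0) :
    tSum (fun k : Fin n => tdiv (tTr (Fmat B p q ((k : ℕ) + 1))) ((k : ℕ) + 1)) =
        tTr (Fmat B p q 1) ∧
      tTr (Fmat B p q 1) = vMv (fun i => tconj (q i)) (kstar B) p :=
  tropical_trace_terms_dominated_general B p q
end
end

section
/- Let B ∈ (ℝ ∪ {-∞})^{n×n} with Tr(B) ≤ 0 (tropical one), let p, q be nonzero vectors with θ ≥ q⁻ B^i p for all 0 ≤ i ≤ n−1 where θ is a finite scalar. Then for every k ≥ 2 and indices i_0, i_1, …, i_k ≥ 0, θ^{−k} ⊗ (q⁻B^{i_1}p ⋯ q⁻B^{i_{k−1}}p) ⊗ B^{i_0} p q⁻ B^{i_k} ≤ θ^{−1} ⊗ B^{i_0} p q⁻ B^{i_k} entrywise. -/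
noncomputable section
/-- The scalar q⁻ B^m p. -/
def sclr {n : ℕ} (B : Matrix (Fin n) (Fin n) T) (p q : Fin n → T) (m : ℕ) : T :=
  vMv (fun i => tconj (q i)) (tpow B m) p

/-!
Expand `(B^m)_{ij}` as the weight of an optimal walk of length `m`. If `m ≥ n` the walk
revisits a vertex, and the closed subwalk between the two visits is a cycle of length at most
`n`, of weight at most `Tr(B) ≤ 0`; cutting it out shows `(B^m)_{ij} ≤ (B^{m'})_{ij}` for some
`m' < m`. Hence every `q⁻B^m p` is dominated by some `q⁻B^c p` with `c < n`, so by `θ`, and the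
product of the `k - 1` scalars is at most `θ^{k-1}`.
-/

section Tropical

variable {n : ℕ}

lemma le_tSum (f : Fin n → T) (j : Fin n) : f j ≤ tSum f :=
  Finset.le_sup (Finset.mem_univ j)

lemma tSum_le {f : Fin n → T} {b : T} (h : ∀ j, f j ≤ b) : tSum f ≤ b :=
  Finset.sup_le fun j _ => h j

lemma add_tSum (a : T) (f : Fin n → T) : a + tSum f = tSum fun j => a + f j :=
  Finset.apply_sup_eq_sup_comp_of_linearOrder (a + ·) (fun _ _ h => add_le_add_right h a)
    (WithBot.add_bot a)

lemma exists_tSum_eq (hn : 0 < n) (f : Fin n → T) : ∃ j, tSum f = f j := by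
  obtain ⟨j, -, hj⟩ := Finset.exists_mem_eq_sup Finset.univ ⟨⟨0, hn⟩, Finset.mem_univ _⟩ f
  exact ⟨j, hj⟩

lemma tpow_add_le (B : Matrix (Fin n) (Fin n) T) (a b : ℕ) (i k j : Fin n) :
    tpow B a i k + tpow B b k j ≤ tpow B (a + b) i j := by
  induction b generalizing j with
  | zero =>
    by_cases hkj : k = j <;> simp [hkj, tpow, tId]
  | succ b ih =>
    change tpow B a i k + tSum (fun l => tpow B b k l + B l j) ≤
      tSum fun l => tpow B (a + b) i l + B l j
    rw [add_tSum]
    refine tSum_le fun l => le_trans ?_ (le_tSum _ l)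
    rw [← add_assoc]
    exact add_le_add_left (ih l) _

lemma tpow_diag_le_TrB (B : Matrix (Fin n) (Fin n) T) {c : ℕ} (hc : 0 < c) (hcn : c ≤ n)
    (i : Fin n) : tpow B c i i ≤ TrB B := by
  obtain ⟨d, rfl⟩ : ∃ d, c = d + 1 := ⟨c - 1, by omega⟩
  exact le_trans (le_tSum (fun l => tpow B (d + 1) l l) i)
    (le_tSum (fun l : Fin n => tTr (tpow B ((l : ℕ) + 1))) ⟨d, by omega⟩)

end Tropical

section Walks

variable {n : ℕ} (B : Matrix (Fin n) (Fin n) T)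

def walkWeight (m : ℕ) (w : ℕ → Fin n) : T :=
  ∑ t ∈ Finset.range m, B (w t) (w (t + 1))

lemma walkWeight_add (a b : ℕ) (w : ℕ → Fin n) :
    walkWeight B (a + b) w = walkWeight B a w + walkWeight B b fun r => w (a + r) := by
  simp only [walkWeight, Finset.sum_range_add, add_assoc]

lemma walkWeight_succ (m : ℕ) (w : ℕ → Fin n) :
    walkWeight B (m + 1) w = walkWeight B m w + B (w m) (w (m + 1)) :=
  Finset.sum_range_succ _ _

lemma walkWeight_le_tpow (m : ℕ) (w : ℕ → Fin n) : walkWeight B m w ≤ tpow B m (w 0) (w m) := by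
  induction m with
  | zero => simp [walkWeight, tpow, tId]
  | succ m ih =>
    rw [walkWeight_succ]
    exact le_trans (add_le_add_left ih _) (le_tSum (fun l => tpow B m (w 0) l + B l _) (w m))

lemma exists_walkWeight_eq_tpow {m : ℕ} {i j : Fin n} (h : tpow B m i j ≠ ⊥) :
    ∃ w : ℕ → Fin n, w 0 = i ∧ w m = j ∧ walkWeight B m w = tpow B m i j := by
  induction m generalizing j with
  | zero =>
    have hij : i = j := by by_contra hij; simp [tpow, tId, hij] at h
    exact ⟨fun _ => i, rfl, hij, by simp [walkWeight, tpow, tId, hij]⟩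
  | succ m ih =>
    obtain ⟨l, hl⟩ := exists_tSum_eq i.pos fun l => tpow B m i l + B l j
    have hl' : tpow B (m + 1) i j = tpow B m i l + B l j := hl
    rw [hl'] at h
    obtain ⟨w, hw0, hwm, hw⟩ := ih (WithBot.add_ne_bot.1 h).1
    refine ⟨fun t => if t ≤ m then w t else j, by simp [hw0], by simp, ?_⟩
    have hprefix : walkWeight B m (fun t => if t ≤ m then w t else j) = walkWeight B m w :=
      Finset.sum_congr rfl fun t ht => by
        have := Finset.mem_range.1 ht
        simp [show t ≤ m by omega, show t + 1 ≤ m by omega]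
    rw [walkWeight_succ, hprefix, hw, hl']
    simp [hwm]

lemma exists_lt_tpow_le (hTr : TrB B ≤ 0) {m : ℕ} (hm : n ≤ m) (i j : Fin n) :
    ∃ m' < m, tpow B m i j ≤ tpow B m' i j := by
  by_cases hbot : tpow B m i j = ⊥
  · exact ⟨0, by have := i.pos; omega, by simp [hbot]⟩
  obtain ⟨w, rfl, rfl, hw⟩ := exists_walkWeight_eq_tpow B hbot
  obtain ⟨x, y, hxy, hwxy⟩ := Fintype.exists_ne_map_eq_of_card_lt
    (fun t : Fin (n + 1) => w t) (by simp)
  obtain ⟨s, t, hst, htn, hws⟩ : ∃ s t : ℕ, s < t ∧ t ≤ n ∧ w s = w t := by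
    rcases lt_or_gt_of_ne hxy with h | h
    · exact ⟨x, y, h, by omega, hwxy⟩
    · exact ⟨y, x, h, by omega, hwxy.symm⟩
  obtain ⟨c, rfl⟩ := Nat.exists_eq_add_of_le hst.le
  obtain ⟨d, rfl⟩ := Nat.exists_eq_add_of_le (htn.trans hm)
  refine ⟨s + d, by omega, ?_⟩
  have hcycle : tpow B c (w s) (w s) ≤ 0 :=
    (tpow_diag_le_TrB B (by omega) (by omega) _).trans hTr
  have hprefix := walkWeight_le_tpow B s w
  have hloop := walkWeight_le_tpow B c fun r => w (s + r)
  have hsuffix := walkWeight_le_tpow B d fun r => w (s + c + r)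
  simp only [add_zero, ← hws] at hloop hsuffix
  calc tpow B (s + c + d) (w 0) (w (s + c + d))
      = walkWeight B s w + walkWeight B c (fun r => w (s + r)) +
          walkWeight B d (fun r => w (s + c + r)) := by
        rw [← hw, walkWeight_add, walkWeight_add]
    _ ≤ tpow B s (w 0) (w s) + 0 + tpow B d (w s) (w (s + c + d)) := by
        gcongr
        exact hloop.trans hcycle
    _ ≤ tpow B (s + d) (w 0) (w (s + c + d)) := by
        rw [add_zero]
        exact tpow_add_le B s d _ _ _

lemma exists_lt_card_tpow_le (hTr : TrB B ≤ 0) (m : ℕ) (i j : Fin n) :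
    ∃ c < n, tpow B m i j ≤ tpow B c i j := by
  induction m using Nat.strong_induction_on with
  | _ m ih =>
    by_cases hm : m < n
    · exact ⟨m, hm, le_rfl⟩
    obtain ⟨m', hm', hle⟩ := exists_lt_tpow_le B hTr (not_lt.1 hm) i j
    obtain ⟨c, hc, hle'⟩ := ih m' hm'
    exact ⟨c, hc, hle.trans hle'⟩

end Walks

section Scalars

variable {n : ℕ} (B : Matrix (Fin n) (Fin n) T) (p q : Fin n → T)

lemma le_sclr (m : ℕ) (i j : Fin n) : tconj (q i) + (tpow B m i j + p j) ≤ sclr B p q m :=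
  (add_le_add_right (le_tSum (fun j => tpow B m i j + p j) j) _).trans
    (le_tSum (fun i => tconj (q i) + tSum fun j => tpow B m i j + p j) i)

lemma sclr_le_of_forall_lt (hTr : TrB B ≤ 0) {θ : T} (hθ : ∀ m < n, sclr B p q m ≤ θ) (m : ℕ) :
    sclr B p q m ≤ θ := by
  refine tSum_le fun i => ?_
  rw [add_tSum]
  refine tSum_le fun j => ?_
  obtain ⟨c, hc, hle⟩ := exists_lt_card_tpow_le B hTr m i j
  calc tconj (q i) + (tpow B m i j + p j) ≤ tconj (q i) + (tpow B c i j + p j) := by gcongr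
    _ ≤ sclr B p q c := le_sclr B p q c i j
    _ ≤ θ := hθ c hc

end Scalars

theorem tropical_theta_domination_general {n : ℕ} (B : Matrix (Fin n) (Fin n) T)
    (p q : Fin n → T)
    (hTr : TrB B ≤ 0) (θ : ℝ) (hθ : ∀ m < n, sclr B p q m ≤ (θ : T))
    (k : ℕ) (hk : 2 ≤ k) (i₀ iₖ : ℕ) (v : Fin (k - 1) → ℕ) (a b : Fin n) :
    ((-(k • θ) : ℝ) : T) + (∑ j, sclr B p q (v j)) +
        tMulM (tMulM (tpow B i₀) (pqm p q)) (tpow B iₖ) a b ≤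
      ((-θ : ℝ) : T) + tMulM (tMulM (tpow B i₀) (pqm p q)) (tpow B iₖ) a b := by
  gcongr
  have hsum : ∑ j, sclr B p q (v j) ≤ (((k - 1) • θ : ℝ) : T) :=
    calc ∑ j, sclr B p q (v j) ≤ ∑ _j : Fin (k - 1), (θ : T) :=
          Finset.sum_le_sum fun j _ => sclr_le_of_forall_lt B p q hTr hθ (v j)
      _ = (((k - 1) • θ : ℝ) : T) := by
        rw [Finset.sum_const, Finset.card_univ, Fintype.card_fin, WithBot.coe_nsmul]
  calc ((-(k • θ) : ℝ) : T) + ∑ j, sclr B p q (v j)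
      ≤ ((-(k • θ) : ℝ) : T) + (((k - 1) • θ : ℝ) : T) := by gcongr
    _ = ((-θ : ℝ) : T) := by
        rw [← WithBot.coe_add]
        congr 1
        simp only [nsmul_eq_mul, Nat.cast_sub (by omega : 1 ≤ k), Nat.cast_one]
        ring

/-- θ^{−k} (q⁻B^{i₁}p ⋯ q⁻B^{i_{k−1}}p) B^{i₀} p q⁻ B^{i_k}
    ≤ θ^{−1} B^{i₀} p q⁻ B^{i_k} entrywise, for k ≥ 2. -/
theorem tropical_theta_domination {n : ℕ} (B : Matrix (Fin n) (Fin n) T)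
    (p q : Fin n → T) (hp : ∃ i, p i ≠ ⊥) (hq : ∃ i, q i ≠ ⊥)
    (hTr : TrB B ≤ 0) (θ : ℝ) (hθ : ∀ m < n, sclr B p q m ≤ (θ : T))
    (k : ℕ) (hk : 2 ≤ k) (i₀ iₖ : ℕ) (v : Fin (k - 1) → ℕ) (a b : Fin n) :
    ((-(k • θ) : ℝ) : T) + (∑ j, sclr B p q (v j)) +
        tMulM (tMulM (tpow B i₀) (pqm p q)) (tpow B iₖ) a b ≤
      ((-θ : ℝ) : T) + tMulM (tMulM (tpow B i₀) (pqm p q)) (tpow B iₖ) a b :=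
  tropical_theta_domination_general B p q hTr θ hθ k hk i₀ iₖ v a b
end
end

section
/- Deviation scheduling theorem: under the same hypotheses (R = B ⊕ DC, Tr(R) ≤ 0, s⁻ = f⁻C ⊕ h⁻, s⁻R*g ≤ 0, C column-regular, f, h regular), the minimum of x⁻ 1 1ᵀ x (= max_i x_i − min_i x_i) over regular x with Bx ≤ x, D(Cx) ≤ x, g ≤ x ≤ h, Cx ≤ f equals θ = ⊕_{0≤i+j≤n−2} ‖s⁻R^i‖·‖R^j g‖ ⊕ ‖R*‖. -/
noncomputable section
/-- Pairs (i,j) of exponents with 0 ≤ i + j ≤ n − 2. -/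
def pairSet (n : ℕ) : Finset (ℕ × ℕ) :=
  (Finset.range n ×ˢ Finset.range n).filter (fun ij => ij.1 + ij.2 + 2 ≤ n)

/-!
A regular `x` is feasible iff `Rx ≤ x`, `s⁻x ≤ 0` and `g ≤ x`. Then `R^k x ≤ x` for every `k`,
so `s⁻R^i` is bounded by `x⁻` and `R^j g` by `x`, and `R*_{ab} ≤ x_a - x_b`: hence `θ` bounds the
deviation of every feasible `x` from below.

Conversely, `x = R*(g ⊕ γ⁻¹ 1)` with `γ = ‖s⁻R*‖` is feasible, with deviation at most
`‖R* g‖ γ ⊕ ‖R*‖`. To compare with `θ`, read entries of `R^i` as maximal weights of walks. Since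
`Tr(R) ≤ 0`, every closed walk has nonpositive weight. Two walks with `n + 1` vertex positions in
total either repeat a vertex, and a cycle can be cut out, or they meet and can exchange their tails;
so `R^i_{ml} R^j_{ab}` is dominated by a term with `i + j ≤ n - 2` or by `R*_{mb} R*_{al}`, and
the latter is absorbed by `s⁻R*g ≤ 0` and `‖R*‖`.
-/

namespace TropicalScheduling

open Finset

variable {n : ℕ}

section Algebra

lemma tSum_le_iff {f : Fin n → T} {c : T} : tSum f ≤ c ↔ ∀ i, f i ≤ c := by
  simp [tSum]

lemma le_tSum (f : Fin n → T) (i : Fin n) : f i ≤ tSum f :=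
  le_sup (mem_univ i)

lemma le_tSum_of_le {f : Fin n → T} {c : T} (i : Fin n) (h : c ≤ f i) : c ≤ tSum f :=
  h.trans (le_tSum f i)

lemma tSum_mono {f g : Fin n → T} (h : ∀ i, f i ≤ g i) : tSum f ≤ tSum g :=
  sup_mono_fun fun i _ => h i

lemma add_finset_sup {ι : Type*} (c : T) (s : Finset ι) (f : ι → T) :
    c + s.sup f = s.sup fun i => c + f i :=
  apply_sup_eq_sup_comp_of_linearOrder (c + ·) (fun _ _ h => add_le_add_right h c)
    (WithBot.add_bot c)

lemma finset_sup_add {ι : Type*} (s : Finset ι) (f : ι → T) (c : T) :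
    s.sup f + c = s.sup fun i => f i + c :=
  apply_sup_eq_sup_comp_of_linearOrder (· + c) (fun _ _ h => add_le_add_left h c)
    (WithBot.bot_add c)

lemma tSum_add_tSum_le {m : ℕ} {f : Fin n → T} {g : Fin m → T} {c : T}
    (h : ∀ i j, f i + g j ≤ c) : tSum f + tSum g ≤ c := by
  rw [tSum, finset_sup_add]
  refine Finset.sup_le fun i _ => ?_
  rw [tSum, add_finset_sup]
  exact Finset.sup_le fun j _ => h i j

lemma neg_coe_add_nonpos_iff {a : T} {r : ℝ} : ((-r : ℝ) : T) + a ≤ 0 ↔ a ≤ r := by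
  induction a using WithBot.recBotCoe with
  | bot => simp
  | coe s =>
    rw [← WithBot.coe_add, ← WithBot.coe_zero, WithBot.coe_le_coe, WithBot.coe_le_coe]
    constructor <;> intro <;> linarith

lemma add_coe_add_neg_coe (a : T) (r : ℝ) : a + (r : T) + ((-r : ℝ) : T) = a := by
  induction a using WithBot.recBotCoe with
  | bot => simp
  | coe s =>
    rw [← WithBot.coe_add, ← WithBot.coe_add]
    norm_num

lemma tSum_tId_add (x : Fin n → T) (i : Fin n) : tSum (fun k => tId n i k + x k) = x i := by
  refine le_antisymm (tSum_le_iff.2 fun k => ?_) (le_tSum_of_le i (by simp [tId]))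
  by_cases hik : i = k
  · subst hik; simp [tId]
  · simp [tId, hik]

lemma tSum_add_tId (x : Fin n → T) (j : Fin n) : tSum (fun k => x k + tId n k j) = x j := by
  simpa only [add_comm, tId, eq_comm] using tSum_tId_add x j

end Algebra

section Matrices

variable {m k : ℕ}

def tMulV (A : Matrix (Fin m) (Fin n) T) (x : Fin n → T) : Fin m → T :=
  fun i => tSum fun j => A i j + x j

def tVecMul (x : Fin m → T) (A : Matrix (Fin m) (Fin n) T) : Fin n → T :=
  fun j => tSum fun i => x i + A i j

lemma tMulV_tMulM (A : Matrix (Fin m) (Fin n) T) (B : Matrix (Fin n) (Fin k) T)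
    (x : Fin k → T) : tMulV (tMulM A B) x = tMulV A (tMulV B x) := by
  funext i
  simp only [tMulV, tMulM, tSum, finset_sup_add, add_finset_sup, add_assoc]
  exact Finset.sup_comm _ _ _

lemma tMulM_assoc (A : Matrix (Fin m) (Fin n) T) (B : Matrix (Fin n) (Fin k) T)
    {p : ℕ} (C : Matrix (Fin k) (Fin p) T) : tMulM (tMulM A B) C = tMulM A (tMulM B C) := by
  funext i j
  exact congrFun (tMulV_tMulM A B fun l => C l j) i

lemma tMulM_tId (A : Matrix (Fin m) (Fin n) T) : tMulM A (tId n) = A := by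
  funext i j
  exact tSum_add_tId (A i) j

lemma tId_tMulM (A : Matrix (Fin n) (Fin m) T) : tMulM (tId n) A = A := by
  funext i j
  exact tSum_tId_add (A · j) i

lemma tMulV_tId (x : Fin n → T) : tMulV (tId n) x = x :=
  funext (tSum_tId_add x)

lemma tMulV_mono {A : Matrix (Fin m) (Fin n) T} {x y : Fin n → T} (h : ∀ j, x j ≤ y j)
    (i : Fin m) : tMulV A x i ≤ tMulV A y i :=
  tSum_mono fun j => add_le_add_right (h j) _

lemma tMulV_max_const_le (A : Matrix (Fin m) (Fin n) T) (x : Fin n → T) (c : T) (i : Fin m) :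
    tMulV A (fun j => max (x j) c) i ≤ max (tMulV A x i) (tSum (A i) + c) :=
  tSum_le_iff.2 fun j => by
    rw [add_max]
    exact max_le_max (le_tSum (fun j => A i j + x j) j) (add_le_add_left (le_tSum (A i) j) c)

lemma tMulV_mono_left {A B : Matrix (Fin m) (Fin n) T} (h : ∀ i j, A i j ≤ B i j)
    (x : Fin n → T) (i : Fin m) : tMulV A x i ≤ tMulV B x i :=
  tSum_mono fun j => add_le_add_left (h i j) _

lemma tpow_succ' (A : Matrix (Fin n) (Fin n) T) (k : ℕ) :
    tpow A (k + 1) = tMulM A (tpow A k) := by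
  induction k with
  | zero => exact (tId_tMulM A).trans (tMulM_tId A).symm
  | succ k ih =>
    change tMulM (tpow A (k + 1)) A = tMulM A (tMulM (tpow A k) A)
    rw [ih, tMulM_assoc]

lemma tpow_tMulV_le {A : Matrix (Fin n) (Fin n) T} {x : Fin n → T}
    (hx : ∀ i, tMulV A x i ≤ x i) (k : ℕ) (i : Fin n) : tMulV (tpow A k) x i ≤ x i := by
  induction k generalizing i with
  | zero => rw [tpow, tMulV_tId]
  | succ k ih =>
    rw [tpow, tMulV_tMulM]
    exact (tMulV_mono hx i).trans (ih i)

lemma kstar_tMulV_le {A : Matrix (Fin n) (Fin n) T} {x : Fin n → T}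
    (hx : ∀ i, tMulV A x i ≤ x i) (i : Fin n) : tMulV (kstar A) x i ≤ x i := by
  refine tSum_le_iff.2 fun j => ?_
  rw [kstar, tSum, finset_sup_add]
  exact Finset.sup_le fun k _ => (le_tSum _ j).trans (tpow_tMulV_le hx k i)

lemma zero_le_kstar (A : Matrix (Fin n) (Fin n) T) (a : Fin n) : 0 ≤ kstar A a a :=
  le_tSum_of_le ⟨0, a.pos⟩ (by simp [tpow, tId])

lemma le_tMulV_kstar (A : Matrix (Fin n) (Fin n) T) (x : Fin n → T) (a : Fin n) :
    x a ≤ tMulV (kstar A) x a :=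
  le_tSum_of_le a (le_add_of_nonneg_left (zero_le_kstar A a))

end Matrices

section Walks

/-- A walk is encoded by its start vertex and the list of the vertices it visits next. -/
def walkEnd : Fin n → List (Fin n) → Fin n
  | a, [] => a
  | _, b :: L => walkEnd b L

variable (A : Matrix (Fin n) (Fin n) T)

def walkWeight : Fin n → List (Fin n) → T
  | _, [] => 0
  | a, b :: L => A a b + walkWeight b L

variable {A}

lemma walkEnd_append (a : Fin n) (L₁ L₂ : List (Fin n)) :
    walkEnd a (L₁ ++ L₂) = walkEnd (walkEnd a L₁) L₂ := by
  induction L₁ generalizing a with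
  | nil => rfl
  | cons b L ih => exact ih b

lemma walkWeight_append (a : Fin n) (L₁ L₂ : List (Fin n)) :
    walkWeight A a (L₁ ++ L₂) = walkWeight A a L₁ + walkWeight A (walkEnd a L₁) L₂ := by
  induction L₁ generalizing a with
  | nil => simp [walkWeight, walkEnd]
  | cons b L ih => simp [walkWeight, walkEnd, ih b, add_assoc]

lemma walkWeight_le_tpow (a : Fin n) (L : List (Fin n)) :
    walkWeight A a L ≤ tpow A L.length a (walkEnd a L) := by
  induction L generalizing a with
  | nil => simp [walkWeight, walkEnd, tpow, tId]
  | cons b L ih =>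
    rw [List.length_cons, tpow_succ']
    exact le_tSum_of_le b (add_le_add_right (ih b) _)

lemma exists_walk_of_tpow_ne_bot {k : ℕ} {a b : Fin n} (h : tpow A k a b ≠ ⊥) :
    ∃ L, L.length = k ∧ walkEnd a L = b ∧ tpow A k a b ≤ walkWeight A a L := by
  induction k generalizing a with
  | zero =>
    obtain rfl : a = b := by
      by_contra hab
      exact h (by simp [tpow, tId, hab])
    exact ⟨[], rfl, rfl, by simp [tpow, tId, walkWeight]⟩
  | succ k ih =>
    obtain ⟨c, -, hc⟩ := exists_mem_eq_sup univ ⟨a, mem_univ a⟩ fun c => A a c + tpow A k c b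
    have hsucc : tpow A (k + 1) a b = A a c + tpow A k c b := by rw [tpow_succ']; exact hc
    rw [hsucc] at h ⊢
    obtain ⟨L, hlen, hend, hle⟩ := ih (WithBot.add_ne_bot.1 h).2
    exact ⟨c :: L, by simp [hlen], hend, add_le_add_right hle _⟩

lemma exists_take_walkEnd_eq (a : Fin n) {L : List (Fin n)} (hL : n ≤ L.length) :
    ∃ p p', p ≠ p' ∧ p ≤ L.length ∧ p' ≤ L.length ∧
      walkEnd a (L.take p) = walkEnd a (L.take p') := by
  obtain ⟨p, p', hne, heq⟩ := Fintype.exists_ne_map_eq_of_card_lt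
    (fun p : Fin (L.length + 1) => walkEnd a (L.take p)) (by simpa using Nat.lt_succ_of_le hL)
  exact ⟨p, p', Fin.val_ne_of_ne hne, Nat.lt_succ_iff.1 p.2, Nat.lt_succ_iff.1 p'.2, heq⟩

lemma exists_cycle_of_take_walkEnd_eq {a : Fin n} {L : List (Fin n)} {p p' : ℕ} (hne : p ≠ p')
    (hp : p ≤ L.length) (hp' : p' ≤ L.length) (h : walkEnd a (L.take p) = walkEnd a (L.take p')) :
    ∃ L₁ C L₂, L = L₁ ++ C ++ L₂ ∧ C ≠ [] ∧ walkEnd (walkEnd a L₁) C = walkEnd a L₁ := by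
  wlog hlt : p < p' generalizing p p'
  · exact this hne.symm hp' hp h.symm (lt_of_le_of_ne (not_lt.1 hlt) hne.symm)
  have htake : L.take p' = L.take p ++ (L.drop p).take (p' - p) := by
    rw [← List.take_add, Nat.add_sub_cancel' hlt.le]
  refine ⟨L.take p, (L.drop p).take (p' - p), L.drop p', ?_, ?_, ?_⟩
  · rw [← htake, List.take_append_drop]
  · simp only [ne_eq, List.take_eq_nil_iff, List.drop_eq_nil_iff]
    omega
  · rw [← walkEnd_append, ← htake, h]

lemma walkEnd_append_cycle {a : Fin n} {L₁ C : List (Fin n)} (L₂ : List (Fin n))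
    (hC : walkEnd (walkEnd a L₁) C = walkEnd a L₁) :
    walkEnd a (L₁ ++ C ++ L₂) = walkEnd a (L₁ ++ L₂) := by
  rw [walkEnd_append, walkEnd_append, walkEnd_append, hC]

lemma walkWeight_append_cycle {a : Fin n} {L₁ C : List (Fin n)} (L₂ : List (Fin n))
    (hC : walkEnd (walkEnd a L₁) C = walkEnd a L₁) :
    walkWeight A a (L₁ ++ C ++ L₂) = walkWeight A a (L₁ ++ L₂) + walkWeight A (walkEnd a L₁) C := by
  rw [walkWeight_append, walkWeight_append, walkWeight_append, walkEnd_append, hC, add_right_comm]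

end Walks

section CycleNonpositive

variable {A : Matrix (Fin n) (Fin n) T}

/-- Closed walks of length at most `n` are bounded by `TrB A`; longer ones split off a cycle. -/
lemma walkWeight_nonpos_of_closed (hTr : TrB A ≤ 0) (a : Fin n) (L : List (Fin n))
    (hL : walkEnd a L = a) : walkWeight A a L ≤ 0 := by
  induction hk : L.length using Nat.strong_induction_on generalizing a L with
  | _ k ih =>
  rcases L with _ | ⟨b, L⟩
  · exact le_rfl
  by_cases hkn : k ≤ n
  · have hpos : 0 < k := by rw [← hk, List.length_cons]; omega
    have hw := walkWeight_le_tpow (A := A) a (b :: L)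
    rw [hk, hL] at hw
    calc walkWeight A a (b :: L) ≤ tpow A k a a := hw
      _ ≤ tTr (tpow A k) := le_tSum (fun j => tpow A k j j) a
      _ ≤ TrB A := le_tSum_of_le ⟨k - 1, by omega⟩ (by rw [Nat.sub_add_cancel hpos])
      _ ≤ 0 := hTr
  · obtain ⟨p, p', hne, hp, hp', h⟩ := exists_take_walkEnd_eq b (L := L) (by rw [List.length_cons] at hk; omega)
    obtain ⟨L₁, C, L₂, rfl, hC, hcyc⟩ := exists_cycle_of_take_walkEnd_eq hne hp hp' h
    change walkWeight A a ((b :: L₁) ++ C ++ L₂) ≤ 0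
    change walkEnd a ((b :: L₁) ++ C ++ L₂) = a at hL
    rw [walkEnd_append_cycle (a := a) (L₁ := b :: L₁) L₂ hcyc] at hL
    rw [walkWeight_append_cycle (a := a) (L₁ := b :: L₁) L₂ hcyc]
    have hC0 : C.length ≠ 0 := by simpa using hC
    refine add_nonpos (ih _ ?_ a _ hL rfl) (ih _ ?_ _ C hcyc rfl) <;>
      simp only [List.length_append, List.length_cons] at hk ⊢ <;> omega

lemma walkWeight_append_cycle_le (hTr : TrB A ≤ 0) {a : Fin n} {L₁ C : List (Fin n)}
    (L₂ : List (Fin n)) (hC : walkEnd (walkEnd a L₁) C = walkEnd a L₁) :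
    walkWeight A a (L₁ ++ C ++ L₂) ≤ walkWeight A a (L₁ ++ L₂) := by
  rw [walkWeight_append_cycle L₂ hC]
  exact add_le_of_nonpos_right (walkWeight_nonpos_of_closed hTr _ C hC)

lemma exists_shorter_walk (hTr : TrB A ≤ 0) {a : Fin n} {L : List (Fin n)} {p p' : ℕ}
    (hne : p ≠ p') (hp : p ≤ L.length) (hp' : p' ≤ L.length)
    (h : walkEnd a (L.take p) = walkEnd a (L.take p')) :
    ∃ L', L'.length < L.length ∧ walkEnd a L' = walkEnd a L ∧
      walkWeight A a L ≤ walkWeight A a L' := by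
  obtain ⟨L₁, C, L₂, rfl, hC, hcyc⟩ := exists_cycle_of_take_walkEnd_eq hne hp hp' h
  refine ⟨L₁ ++ L₂, ?_, (walkEnd_append_cycle L₂ hcyc).symm,
    walkWeight_append_cycle_le hTr L₂ hcyc⟩
  have hC0 : C.length ≠ 0 := by simpa using hC
  simp only [List.length_append]
  omega

lemma walkWeight_le_kstar (hTr : TrB A ≤ 0) (a : Fin n) (L : List (Fin n)) :
    walkWeight A a L ≤ kstar A a (walkEnd a L) := by
  induction hk : L.length using Nat.strong_induction_on generalizing L with
  | _ k ih =>
  by_cases hkn : k < n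
  · exact (walkWeight_le_tpow a L).trans (le_tSum_of_le ⟨k, hkn⟩ (by rw [hk]))
  · obtain ⟨p, p', hne, hp, hp', h⟩ := exists_take_walkEnd_eq a (L := L) (by omega)
    obtain ⟨L', hlt, hend, hle⟩ := exists_shorter_walk hTr hne hp hp' h
    exact hle.trans (hend ▸ ih _ (hk ▸ hlt) L' rfl)

lemma tpow_le_kstar (hTr : TrB A ≤ 0) (k : ℕ) (a b : Fin n) : tpow A k a b ≤ kstar A a b := by
  by_cases hbot : tpow A k a b = ⊥
  · exact hbot ▸ bot_le
  obtain ⟨L, -, rfl, hle⟩ := exists_walk_of_tpow_ne_bot hbot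
  exact hle.trans (walkWeight_le_kstar hTr a L)

lemma tMulM_kstar_le (hTr : TrB A ≤ 0) (a b : Fin n) : tMulM A (kstar A) a b ≤ kstar A a b := by
  refine tSum_le_iff.2 fun c => ?_
  rw [kstar, tSum, add_finset_sup]
  refine Finset.sup_le fun k _ => (tpow_le_kstar hTr (k + 1) a b).trans' ?_
  rw [tpow_succ']
  exact le_tSum (fun c => A a c + tpow A k c b) c

end CycleNonpositive

section Pairs

def pairBound (A : Matrix (Fin n) (Fin n) T) (m l a b : Fin n) : T :=
  max ((pairSet n).sup fun ij => tpow A ij.1 m l + tpow A ij.2 a b) (kstar A m b + kstar A a l)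

variable {A : Matrix (Fin n) (Fin n) T}

lemma walkWeight_add_walkWeight_le_of_meet (hTr : TrB A ≤ 0) {m a : Fin n}
    (L₁ L₂ : List (Fin n)) {p q : ℕ} (h : walkEnd m (L₁.take p) = walkEnd a (L₂.take q)) :
    walkWeight A m L₁ + walkWeight A a L₂ ≤
      kstar A m (walkEnd a L₂) + kstar A a (walkEnd m L₁) := by
  have hswap : walkWeight A m L₁ + walkWeight A a L₂ =
      walkWeight A m (L₁.take p ++ L₂.drop q) + walkWeight A a (L₂.take q ++ L₁.drop p) := by
    conv_lhs => rw [← List.take_append_drop p L₁, ← List.take_append_drop q L₂]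
    simp only [walkWeight_append, h]
    ac_rfl
  have hend₁ : walkEnd m (L₁.take p ++ L₂.drop q) = walkEnd a L₂ := by
    rw [walkEnd_append, h, ← walkEnd_append, List.take_append_drop]
  have hend₂ : walkEnd a (L₂.take q ++ L₁.drop p) = walkEnd m L₁ := by
    rw [walkEnd_append, ← h, ← walkEnd_append, List.take_append_drop]
  rw [hswap, ← hend₁, ← hend₂]
  exact add_le_add (walkWeight_le_kstar hTr _ _) (walkWeight_le_kstar hTr _ _)

lemma walkWeight_add_walkWeight_le_pairBound (hTr : TrB A ≤ 0) {m l a b : Fin n}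
    (L₁ L₂ : List (Fin n)) (h₁ : walkEnd m L₁ = l) (h₂ : walkEnd a L₂ = b) :
    walkWeight A m L₁ + walkWeight A a L₂ ≤ pairBound A m l a b := by
  induction hN : L₁.length + L₂.length using Nat.strong_induction_on generalizing L₁ L₂ with
  | _ N ih =>
  by_cases hN2 : N + 2 ≤ n
  · refine le_max_of_le_left (le_sup_of_le (b := (L₁.length, L₂.length)) ?_ ?_)
    · simp only [pairSet, mem_filter, mem_product, mem_range]
      omega
    · rw [← h₁, ← h₂]
      exact add_le_add (walkWeight_le_tpow m L₁) (walkWeight_le_tpow a L₂)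
  obtain ⟨x, y, hxy, hmeet⟩ := Fintype.exists_ne_map_eq_of_card_lt
    (Sum.elim (fun p : Fin (L₁.length + 1) => walkEnd m (L₁.take p))
      (fun q : Fin (L₂.length + 1) => walkEnd a (L₂.take q)))
    (by simp only [Fintype.card_sum, Fintype.card_fin]; omega)
  rcases x with p | q <;> rcases y with p' | q'
  · obtain ⟨L', hlt, hend, hle⟩ := exists_shorter_walk hTr (Fin.val_ne_of_ne (by simpa using hxy))
      (Nat.lt_succ_iff.1 p.2) (Nat.lt_succ_iff.1 p'.2) hmeet
    exact (add_le_add_left hle _).trans (ih _ (by omega) L' L₂ (hend.trans h₁) h₂ rfl)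
  · rw [← h₁, ← h₂]
    exact le_max_of_le_right (walkWeight_add_walkWeight_le_of_meet hTr L₁ L₂ hmeet)
  · rw [← h₁, ← h₂]
    exact le_max_of_le_right (walkWeight_add_walkWeight_le_of_meet hTr L₁ L₂ hmeet.symm)
  · obtain ⟨L', hlt, hend, hle⟩ := exists_shorter_walk hTr (Fin.val_ne_of_ne (by simpa using hxy))
      (Nat.lt_succ_iff.1 q.2) (Nat.lt_succ_iff.1 q'.2) hmeet
    exact (add_le_add_right hle _).trans (ih _ (by omega) L₁ L' h₁ (hend.trans h₂) rfl)

lemma tpow_add_tpow_le_pairBound (hTr : TrB A ≤ 0) (i j : ℕ) (m l a b : Fin n) :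
    tpow A i m l + tpow A j a b ≤ pairBound A m l a b := by
  by_cases h₁ : tpow A i m l = ⊥
  · simp [h₁]
  by_cases h₂ : tpow A j a b = ⊥
  · simp [h₂]
  obtain ⟨L₁, -, hend₁, hle₁⟩ := exists_walk_of_tpow_ne_bot h₁
  obtain ⟨L₂, -, hend₂, hle₂⟩ := exists_walk_of_tpow_ne_bot h₂
  exact (add_le_add hle₁ hle₂).trans (walkWeight_add_walkWeight_le_pairBound hTr L₁ L₂ hend₁ hend₂)

end Pairs

section Scheduling

/-- The objective `x⁻ 1 1ᵀ x = max_i x_i - min_i x_i`. -/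
def deviation (x : Fin n → ℝ) : T :=
  (tSum fun i => (x i : T)) + tSum fun i => ((-x i : ℝ) : T)

/-- `θ = ⊕_{0 ≤ i + j ≤ n - 2} ‖s⁻ R^i‖ ‖R^j g‖ ⊕ ‖R*‖`. -/
def deviationBound (R : Matrix (Fin n) (Fin n) T) (s g : Fin n → T) : T :=
  max ((pairSet n).sup fun ij => tSum (tVecMul s (tpow R ij.1)) + tSum (tMulV (tpow R ij.2) g))
    (tSum fun a => tSum (kstar R a))

lemma tMulV_max_le_iff {B D C : Matrix (Fin n) (Fin n) T} {x : Fin n → T} :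
    (∀ i, tMulV (fun i j => max (B i j) (tMulM D C i j)) x i ≤ x i) ↔
      (∀ i, tMulV B x i ≤ x i) ∧ ∀ i, tMulV D (tMulV C x) i ≤ x i := by
  simp only [← congrFun (tMulV_tMulM D C x)]
  simp only [tMulV, tSum_le_iff, max_add, max_le_iff, forall_and]

lemma conj_bounds_add_nonpos_iff {C : Matrix (Fin n) (Fin n) T} {f h x : Fin n → ℝ} :
    (∀ j, max (tSum fun i => ((-f i : ℝ) : T) + C i j) ((-h j : ℝ) : T) + x j ≤ 0) ↔
      (∀ i, tMulV C (fun j => (x j : T)) i ≤ f i) ∧ ∀ j, x j ≤ h j := by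
  simp only [max_add, max_le_iff, tSum, finset_sup_add, Finset.sup_le_iff, mem_univ,
    true_implies, add_assoc, neg_coe_add_nonpos_iff, WithBot.coe_le_coe, tMulV, forall_and]
  rw [forall_comm]

lemma deviationBound_le_deviation {R : Matrix (Fin n) (Fin n) T} {s g : Fin n → T}
    {x : Fin n → ℝ} (hRx : ∀ i, tMulV R (fun j => (x j : T)) i ≤ x i)
    (hs : ∀ j, s j + x j ≤ 0) (hg : ∀ i, g i ≤ x i) : deviationBound R s g ≤ deviation x := by
  have hpow : ∀ k a b, tpow R k a b + x b ≤ x a := fun k a b =>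
    (le_tSum _ b).trans (tpow_tMulV_le hRx k a)
  refine max_le (Finset.sup_le fun ij _ => ?_) (tSum_le_iff.2 fun a => tSum_le_iff.2 fun b => ?_)
  · rw [deviation, add_comm (tSum fun i => (x i : T))]
    refine add_le_add (tSum_le_iff.2 fun l => tSum_le_iff.2 fun m => le_tSum_of_le l ?_)
      (tSum_mono fun a => tSum_le_iff.2 fun b => (add_le_add_right (hg b) _).trans (hpow _ a b))
    calc s m + tpow R ij.1 m l = s m + tpow R ij.1 m l + x l + ((-x l : ℝ) : T) :=
          (add_coe_add_neg_coe _ _).symm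
      _ ≤ 0 + ((-x l : ℝ) : T) := by
          rw [add_assoc (s m)]
          exact add_le_add_left ((add_le_add_right (hpow _ m l) _).trans (hs m)) _
      _ = _ := zero_add _
  · calc kstar R a b = kstar R a b + x b + ((-x b : ℝ) : T) := (add_coe_add_neg_coe _ _).symm
      _ ≤ deviation x :=
          add_le_add ((le_tSum _ b).trans (kstar_tMulV_le hRx a) |>.trans
            (le_tSum (fun i => (x i : T)) a))
            (le_tSum (fun i => ((-x i : ℝ) : T)) b)

variable {R : Matrix (Fin n) (Fin n) T} {s g : Fin n → T}

lemma tpow_add_tpow_le_deviationBound (hTr : TrB R ≤ 0) (hfeas : ∀ j, s j + tMulV (kstar R) g j ≤ 0)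
    (p q : ℕ) (m l a b : Fin n) :
    tpow R q a b + g b + (s m + tpow R p m l) ≤ deviationBound R s g := by
  calc tpow R q a b + g b + (s m + tpow R p m l)
        = s m + (tpow R p m l + tpow R q a b) + g b := by abel
    _ ≤ s m + pairBound R m l a b + g b := by
        gcongr
        exact tpow_add_tpow_le_pairBound hTr p q m l a b
    _ ≤ deviationBound R s g := by
        rw [pairBound, add_max, max_add, add_finset_sup, finset_sup_add]
        refine max_le (Finset.sup_le fun ij hij => le_max_of_le_left (le_sup_of_le hij ?_)) ?_
        · calc s m + (tpow R ij.1 m l + tpow R ij.2 a b) + g b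
              = (s m + tpow R ij.1 m l) + (tpow R ij.2 a b + g b) := by abel
            _ ≤ _ := add_le_add (le_tSum_of_le l (le_tSum (fun m => s m + tpow R ij.1 m l) m))
                (le_tSum_of_le a (le_tSum (fun b => tpow R ij.2 a b + g b) b))
        · calc s m + (kstar R m b + kstar R a l) + g b
              = (s m + (kstar R m b + g b)) + kstar R a l := by abel
            _ ≤ 0 + tSum fun a => tSum (kstar R a) :=
                add_le_add
                  ((add_le_add_right (le_tSum (fun b => kstar R m b + g b) b) _).trans (hfeas m))
                  (le_tSum_of_le a (le_tSum _ l))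
            _ ≤ deviationBound R s g := by rw [zero_add]; exact le_max_right _ _

lemma tSum_tMulV_kstar_add_tSum_tVecMul_kstar_le (hTr : TrB R ≤ 0)
    (hfeas : ∀ j, s j + tMulV (kstar R) g j ≤ 0) :
    tSum (tMulV (kstar R) g) + tSum (tVecMul s (kstar R)) ≤ deviationBound R s g := by
  refine tSum_add_tSum_le fun a l => tSum_add_tSum_le fun b m => ?_
  change tSum (fun q : Fin n => tpow R q a b) + g b + (s m + tSum fun p : Fin n => tpow R p m l) ≤ _
  rw [tSum, finset_sup_add, tSum, add_finset_sup]
  exact tSum_add_tSum_le fun q p => tpow_add_tpow_le_deviationBound hTr hfeas p q m l a b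

lemma add_tMulV_kstar_max_nonpos (hfeas : ∀ j, s j + tMulV (kstar R) g j ≤ 0) {γ : ℝ}
    (hγ : tSum (tVecMul s (kstar R)) ≤ γ) (j : Fin n) :
    s j + tMulV (kstar R) (fun b => max (g b) ((-γ : ℝ) : T)) j ≤ 0 := by
  rw [tMulV, tSum, add_finset_sup]
  refine Finset.sup_le fun b _ => ?_
  rw [add_max, add_max]
  refine max_le
    ((add_le_add_right (le_tSum (fun b => kstar R j b + g b) b) _).trans (hfeas j)) ?_
  calc s j + (kstar R j b + ((-γ : ℝ) : T)) ≤ (γ : T) + ((-γ : ℝ) : T) := by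
        rw [← add_assoc]
        exact add_le_add_left
          ((le_tSum_of_le b (le_tSum (fun i => s i + kstar R i b) j)).trans hγ) _
    _ = 0 := by simpa using add_coe_add_neg_coe 0 γ

lemma deviation_le_of_eq_tMulV_kstar {γ : ℝ} {x : Fin n → ℝ}
    (hx : ∀ a, (x a : T) = tMulV (kstar R) (fun b => max (g b) ((-γ : ℝ) : T)) a) :
    deviation x ≤ max (tSum (tMulV (kstar R) g) + γ) (tSum fun a => tSum (kstar R a)) := by
  have hmax : tSum (fun a => (x a : T)) ≤
      max (tSum (tMulV (kstar R) g)) ((tSum fun a => tSum (kstar R a)) + ((-γ : ℝ) : T)) :=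
    tSum_le_iff.2 fun a => hx a ▸ (tMulV_max_const_le _ _ _ a).trans
      (max_le_max (le_tSum _ a) (add_le_add_left (le_tSum (fun a => tSum (kstar R a)) a) _))
  have hmin : (tSum fun i => ((-x i : ℝ) : T)) ≤ γ := tSum_le_iff.2 fun a => by
    have hxa : ((-γ : ℝ) : T) ≤ x a := hx a ▸
      (le_max_right (g a) _).trans (le_tMulV_kstar R (fun b => max (g b) ((-γ : ℝ) : T)) a)
    rw [WithBot.coe_le_coe] at hxa
    exact WithBot.coe_le_coe.2 (by linarith)
  calc deviation x ≤ max (tSum (tMulV (kstar R) g))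
        ((tSum fun a => tSum (kstar R a)) + ((-γ : ℝ) : T)) + (γ : T) := add_le_add hmax hmin
    _ = _ := by
        rw [max_add]
        congr 1
        simpa using add_coe_add_neg_coe (tSum fun a => tSum (kstar R a)) (-γ)

lemma exists_deviation_le (hTr : TrB R ≤ 0) (hs : ∀ j, s j ≠ ⊥)
    (hfeas : ∀ j, s j + tMulV (kstar R) g j ≤ 0) :
    ∃ x : Fin n → ℝ, (∀ i, tMulV R (fun j => (x j : T)) i ≤ x i) ∧ (∀ j, s j + x j ≤ 0) ∧
      (∀ i, g i ≤ x i) ∧ deviation x ≤ deviationBound R s g := by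
  rcases isEmpty_or_nonempty (Fin n) with _ | ⟨⟨j₀⟩⟩
  · exact ⟨isEmptyElim, isEmptyElim, isEmptyElim, isEmptyElim, by simp [deviation, tSum]⟩
  obtain ⟨γ, hγ⟩ : ∃ γ : ℝ, (γ : T) = tSum (tVecMul s (kstar R)) :=
    WithBot.ne_bot_iff_exists.1 <| ne_bot_of_le_ne_bot (hs j₀) <|
      le_tSum_of_le j₀ (le_tSum_of_le j₀ (le_add_of_nonneg_right (zero_le_kstar R j₀)))
  set w : Fin n → T := fun b => max (g b) ((-γ : ℝ) : T)
  choose x hx using fun a => WithBot.ne_bot_iff_exists.1 <|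
    ne_bot_of_le_ne_bot WithBot.coe_ne_bot ((le_max_right _ _).trans (le_tMulV_kstar R w a))
  refine ⟨x, fun i => ?_, fun j => ?_, fun i => ?_, ?_⟩
  · rw [show (fun j => (x j : T)) = tMulV (kstar R) w from funext hx, hx i, ← tMulV_tMulM]
    exact tMulV_mono_left (tMulM_kstar_le hTr) w i
  · exact hx j ▸ add_tMulV_kstar_max_nonpos hfeas hγ.ge j
  · exact hx i ▸ (le_max_left _ _).trans (le_tMulV_kstar R w i)
  · refine (deviation_le_of_eq_tMulV_kstar hx).trans (max_le ?_ (le_max_right _ _))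
    exact hγ ▸ tSum_tMulV_kstar_add_tSum_tVecMul_kstar_le hTr hfeas

end Scheduling

end TropicalScheduling

open TropicalScheduling

theorem tropical_deviation_scheduling_general {n : ℕ}
    (B D C : Matrix (Fin n) (Fin n) T)
    (g : Fin n → T) (f h : Fin n → ℝ)
    (R : Matrix (Fin n) (Fin n) T)
    (hRdef : R = fun i j => max (B i j) (tMulM D C i j))
    (hTr : TrB R ≤ 0)
    (sneg : Fin n → T)
    (hsdef : sneg = fun j =>
      max (tSum fun i => ((-(f i) : ℝ) : T) + C i j) ((-(h j) : ℝ) : T))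
    (hfeas : tSum (fun j => sneg j + tSum fun l => kstar R j l + g l) ≤ 0)
    (θ : T)
    (hθdef : θ = max
      ((pairSet n).sup fun ij =>
        (tSum fun l => tSum fun m => sneg m + tpow R ij.1 m l) +
          (tSum fun a => tSum fun b => tpow R ij.2 a b + g b))
      (tSum fun a => tSum fun b => kstar R a b)) :
    IsLeast {v : T | ∃ x : Fin n → ℝ,
      (∀ i, tSum (fun j => B i j + (x j : T)) ≤ (x i : T)) ∧
      (∀ i, tSum (fun j => D i j + tSum fun l => C j l + (x l : T)) ≤ (x i : T)) ∧
      (∀ i, g i ≤ (x i : T)) ∧ (∀ i, x i ≤ h i) ∧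
      (∀ i, tSum (fun j => C i j + (x j : T)) ≤ (f i : T)) ∧
      (tSum fun i => ((x i : ℝ) : T)) + (tSum fun i => ((-(x i) : ℝ) : T)) = v} θ := by
  subst hθdef
  have hfeasible : ∀ x : Fin n → ℝ,
      (∀ i, tMulV R (fun j => (x j : T)) i ≤ x i) ∧ (∀ j, sneg j + x j ≤ 0) ↔
        ((∀ i, tMulV B (fun j => (x j : T)) i ≤ x i) ∧
          ∀ i, tMulV D (tMulV C fun j => (x j : T)) i ≤ x i) ∧
        (∀ i, tMulV C (fun j => (x j : T)) i ≤ f i) ∧ ∀ j, x j ≤ h j := fun x => by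
    rw [hRdef, hsdef, tMulV_max_le_iff, conj_bounds_add_nonpos_iff]
  have hsneg : ∀ j, sneg j ≠ ⊥ := fun j =>
    ne_bot_of_le_ne_bot WithBot.coe_ne_bot (by rw [hsdef]; exact le_max_right _ _)
  constructor
  · obtain ⟨x, hRx, hsx, hgx, hdev⟩ := exists_deviation_le hTr hsneg (tSum_le_iff.1 hfeas)
    obtain ⟨⟨hB, hD⟩, hf, hh⟩ := (hfeasible x).1 ⟨hRx, hsx⟩
    exact ⟨x, hB, hD, hgx, hh, hf, hdev.antisymm (deviationBound_le_deviation hRx hsx hgx)⟩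
  · rintro v ⟨x, hB, hD, hg, hh, hf, rfl⟩
    obtain ⟨hRx, hsx⟩ := (hfeasible x).2 ⟨⟨hB, hD⟩, hf, hh⟩
    exact deviationBound_le_deviation hRx hsx hg

/-- Deviation scheduling theorem: the minimum of x⁻ 1 1ᵀ x (maximum absolute
deviation of start times) over regular x with Bx ≤ x, D(Cx) ≤ x, g ≤ x ≤ h,
Cx ≤ f equals θ = ⊕_{0≤i+j≤n−2} ‖s⁻R^i‖ ‖R^j g‖ ⊕ ‖R*‖. -/
theorem tropical_deviation_scheduling {n : ℕ}
    (B D C : Matrix (Fin n) (Fin n) T) (hC : ∀ j, ∃ i, C i j ≠ ⊥)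
    (g : Fin n → T) (f h : Fin n → ℝ)
    (R : Matrix (Fin n) (Fin n) T)
    (hRdef : R = fun i j => max (B i j) (tMulM D C i j))
    (hTr : TrB R ≤ 0)
    (sneg : Fin n → T)
    (hsdef : sneg = fun j =>
      max (tSum fun i => ((-(f i) : ℝ) : T) + C i j) ((-(h j) : ℝ) : T))
    (hfeas : tSum (fun j => sneg j + tSum fun l => kstar R j l + g l) ≤ 0)
    (θ : T)
    (hθdef : θ = max
      ((pairSet n).sup fun ij =>
        (tSum fun l => tSum fun m => sneg m + tpow R ij.1 m l) +
          (tSum fun a => tSum fun b => tpow R ij.2 a b + g b))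
      (tSum fun a => tSum fun b => kstar R a b)) :
    IsLeast {v : T | ∃ x : Fin n → ℝ,
      (∀ i, tSum (fun j => B i j + (x j : T)) ≤ (x i : T)) ∧
      (∀ i, tSum (fun j => D i j + tSum fun l => C j l + (x l : T)) ≤ (x i : T)) ∧
      (∀ i, g i ≤ (x i : T)) ∧ (∀ i, x i ≤ h i) ∧
      (∀ i, tSum (fun j => C i j + (x j : T)) ≤ (f i : T)) ∧
      (tSum fun i => ((x i : ℝ) : T)) + (tSum fun i => ((-(x i) : ℝ) : T)) = v} θ :=
  tropical_deviation_scheduling_general B D C g f h R hRdef hTr sneg hsdef hfeas θ hθdef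
end
end
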